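/- Let i,j ∈ {1,…,n} be distinct (so n ≥ 2). Then tr(e_{ji} · g(e_{ij})) = tr(e_{ij} · g(e_{ji})). -/

import Mathlib

/-!
Taking traces in the associativity law for `x ⋆ y = x y + g [x, y]` and discarding the terms
`tr (g [u, v]) = 0` leaves `tr (x g [y, z]) = tr (g [x, y] z)`. For `x = e_{ji}`, `y = e_{ii}`,
`z = e_{ij}` the two commutators are `e_{ij}` and `e_{ji}`.
-/

namespace Matrix

variable {m R : Type*} [Fintype m] [Ring R]
  (g : Matrix m m R → Matrix m m R) (star : Matrix m m R → Matrix m m R → Matrix m m R)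

theorem trace_apply_commutator_eq_zero (hstar : ∀ x y, star x y = x * y + g (x * y - y * x))
    (hT : ∀ x y, (star x y).trace = (x * y).trace) (x y : Matrix m m R) :
    (g (x * y - y * x)).trace = 0 := by
  have h := hT x y
  rw [hstar, trace_add] at h
  exact left_eq_add.mp h.symm

theorem trace_mul_apply_commutator (hstar : ∀ x y, star x y = x * y + g (x * y - y * x))
    (hA : ∀ x y z, star x (star y z) = star (star x y) z)
    (hT : ∀ x y, (star x y).trace = (x * y).trace) (x y z : Matrix m m R) :
    (x * g (y * z - z * y)).trace = (g (x * y - y * x) * z).trace := by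
  have h := congrArg trace (hA x y z)
  simp only [hstar] at h
  rw [trace_add, trace_add, trace_apply_commutator_eq_zero g star hstar hT,
    trace_apply_commutator_eq_zero g star hstar hT, add_zero, add_zero] at h
  simp only [mul_add, add_mul, trace_add, mul_assoc] at h
  exact add_left_cancel h

end Matrix

theorem stmt_9_general {F : Type*} [Field F] {n : ℕ}
    (g : Matrix (Fin n) (Fin n) F →ₗ[F] Matrix (Fin n) (Fin n) F)
    (star : Matrix (Fin n) (Fin n) F → Matrix (Fin n) (Fin n) F → Matrix (Fin n) (Fin n) F)
    (hstar : ∀ x y : Matrix (Fin n) (Fin n) F, star x y = x * y + g (x * y - y * x))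
    (hA : ∀ x y z : Matrix (Fin n) (Fin n) F, star x (star y z) = star (star x y) z)
    (hT : ∀ x y : Matrix (Fin n) (Fin n) F, (star x y).trace = (x * y).trace)
    (i j : Fin n) (hij : i ≠ j) :
    (Matrix.single j i (1 : F) * g (Matrix.single i j (1 : F))).trace = (Matrix.single i j (1 : F) * g (Matrix.single j i (1 : F))).trace := by
  have h := Matrix.trace_mul_apply_commutator g star hstar hA hT
    (Matrix.single j i 1) (Matrix.single i i 1) (Matrix.single i j 1)
  simp only [Matrix.single_mul_single_same, Matrix.single_mul_single_of_ne, hij, hij.symm,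
    ne_eq, not_false_eq_true, one_mul, sub_zero] at h
  rw [h, Matrix.trace_mul_comm]

/-- For distinct indices `i, j`: `tr(e_{ji} g(e_{ij})) = tr(e_{ij} g(e_{ji}))`. -/
theorem stmt_9 {F : Type*} [Field F] (h2 : (2 : F) ≠ 0) {n : ℕ}
    (g : Matrix (Fin n) (Fin n) F →ₗ[F] Matrix (Fin n) (Fin n) F)
    (star : Matrix (Fin n) (Fin n) F → Matrix (Fin n) (Fin n) F → Matrix (Fin n) (Fin n) F)
    (hstar : ∀ x y : Matrix (Fin n) (Fin n) F, star x y = x * y + g (x * y - y * x))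
    (hA : ∀ x y z : Matrix (Fin n) (Fin n) F, star x (star y z) = star (star x y) z)
    (hT : ∀ x y : Matrix (Fin n) (Fin n) F, (star x y).trace = (x * y).trace)
    (i j : Fin n) (hij : i ≠ j) :
    (Matrix.single j i (1 : F) * g (Matrix.single i j (1 : F))).trace = (Matrix.single i j (1 : F) * g (Matrix.single j i (1 : F))).trace :=
  stmt_9_general g star hstar hA hT i j hij
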